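/- arXiv:1412.7549 — 2 statements merged into one kernel-verified Lean document; each statement's English description precedes it below -/
import Mathlib

section
/- Let f = (v_1,...,v_k) be an orthonormal k-frame over p ∈ M and φ a smooth function on T^k M. Then the curvature pairing of the vertical gradients is unchanged by projecting onto the skew-symmetric part: Σ_{i,j=1}^k ⟨R(grad^{v,j} φ(f), v_j) v_i, grad^{v,i} φ(f)⟩ = Σ_{i,j=1}^k ⟨R(grad^{v,j}_{o(k)} φ(f), v_j) v_i, grad^{v,i}_{o(k)} φ(f)⟩. -/
open scoped RealInnerProductSpace
open MeasureTheory

noncomputable section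

/-- Calculus on the bundle `T^k M` of `k`-tuples of tangent vectors over a compact
Riemannian `n`-manifold `M`.  All tangent spaces are identified with
`EuclideanSpace ℝ (Fin n)` (via a measurable choice of orthonormal frames), so that
semi-basic vector fields are maps `F → EuclideanSpace ℝ (Fin n)`. -/
structure TupleBundle (n k : ℕ) where
  /-- the base manifold -/
  M : Type
  topM : TopologicalSpace M
  cptM : @CompactSpace M topM
  /-- the total space of `T^k M` -/
  F : Type
  /-- footpoint projection -/
  proj : F → M
  /-- the components `v₁, …, v_k` of a tuple of tangent vectors -/
  vec : F → Fin k → EuclideanSpace ℝ (Fin n)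
  /-- smoothness predicate for real functions on `T^k M` -/
  Smooth : (F → ℝ) → Prop
  /-- smoothness predicate for semi-basic vector fields -/
  SmoothVF : (F → EuclideanSpace ℝ (Fin n)) → Prop
  /-- `pt f u t` is the parallel transport `f_u(t)` of the whole tuple along the
  geodesic through the footpoint of `f` with initial velocity `u` -/
  pt : F → EuclideanSpace ℝ (Fin n) → ℝ → F
  /-- parallel transport of individual tangent vectors along that geodesic -/
  ptv : F → EuclideanSpace ℝ (Fin n) → ℝ →
    (EuclideanSpace ℝ (Fin n) ≃ₗᵢ[ℝ] EuclideanSpace ℝ (Fin n))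
  pt_zero : ∀ (f : F) (u : EuclideanSpace ℝ (Fin n)), pt f u 0 = f
  ptv_zero : ∀ (f : F) (u : EuclideanSpace ℝ (Fin n)), ptv f u 0 = LinearIsometryEquiv.refl ℝ _
  vec_pt : ∀ (f : F) (u : EuclideanSpace ℝ (Fin n)) (t : ℝ) (i : Fin k), vec (pt f u t) i = ptv f u t (vec f i)
  /-- vertical translation: replace the `i`-th vector `vᵢ` of the tuple by `vᵢ + u` -/
  vshift : F → Fin k → EuclideanSpace ℝ (Fin n) → F
  proj_vshift : ∀ (f : F) (i : Fin k) (u : EuclideanSpace ℝ (Fin n)), proj (vshift f i u) = proj f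
  vec_vshift : ∀ (f : F) (i : Fin k) (u : EuclideanSpace ℝ (Fin n)), vec (vshift f i u) = Function.update (vec f) i (vec f i + u)
  /-- the horizontal gradient -/
  gradH : (F → ℝ) → F → EuclideanSpace ℝ (Fin n)
  /-- the `i`-th vertical gradient -/
  gradV : Fin k → (F → ℝ) → F → EuclideanSpace ℝ (Fin n)
  gradH_spec : ∀ (φ : F → ℝ) (f : F) (u : EuclideanSpace ℝ (Fin n)), Smooth φ →
    ⟪gradH φ f, u⟫ = deriv (fun t : ℝ => φ (pt f u t)) 0
  gradV_spec : ∀ (i : Fin k) (φ : F → ℝ) (f : F) (u : EuclideanSpace ℝ (Fin n)), Smooth φ →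
    ⟪gradV i φ f, u⟫ = deriv (fun t : ℝ => φ (vshift f i (t • u))) 0
  /-- horizontal covariant derivative `∇ʰ_u X (f)` of a semi-basic vector field -/
  covH : (F → EuclideanSpace ℝ (Fin n)) → F → EuclideanSpace ℝ (Fin n) →
    EuclideanSpace ℝ (Fin n)
  covH_spec : ∀ (X : F → EuclideanSpace ℝ (Fin n)) (f : F) (u : EuclideanSpace ℝ (Fin n)), SmoothVF X →
    covH X f u = deriv (fun t : ℝ => (ptv f u t).symm (X (pt f u t))) 0
  /-- the `i`-th vertical covariant derivative `∇^{v,i}_u X (f)` -/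
  covV : Fin k → (F → EuclideanSpace ℝ (Fin n)) → F → EuclideanSpace ℝ (Fin n) →
    EuclideanSpace ℝ (Fin n)
  covV_spec : ∀ (i : Fin k) (X : F → EuclideanSpace ℝ (Fin n)) (f : F) (u : EuclideanSpace ℝ (Fin n)), SmoothVF X →
    covV i X f u = deriv (fun t : ℝ => X (vshift f i (t • u))) 0
  /-- the Riemannian curvature tensor `R(x,y)z` at the footpoint of `f` -/
  R : F → EuclideanSpace ℝ (Fin n) → EuclideanSpace ℝ (Fin n) →
    EuclideanSpace ℝ (Fin n) → EuclideanSpace ℝ (Fin n)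
  R_antisym₁ : ∀ (f : F) (x y z w : EuclideanSpace ℝ (Fin n)), ⟪R f x y z, w⟫ = -⟪R f y x z, w⟫
  R_antisym₂ : ∀ (f : F) (x y z w : EuclideanSpace ℝ (Fin n)), ⟪R f x y z, w⟫ = -⟪R f x y w, z⟫
  R_pairsym : ∀ (f : F) (x y z w : EuclideanSpace ℝ (Fin n)), ⟪R f x y z, w⟫ = ⟪R f z w x, y⟫
  R_base : ∀ (f : F) (i : Fin k) (u : EuclideanSpace ℝ (Fin n)), R (vshift f i u) = R f
  smooth_gradH : ∀ (φ : F → ℝ), Smooth φ → SmoothVF (gradH φ)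
  smooth_gradV : ∀ (i : Fin k) (φ : F → ℝ), Smooth φ → SmoothVF (gradV i φ)

namespace TupleBundle

variable {n k : ℕ} (B : TupleBundle n k)

/-- the generator `Gⁱ` of the `i`-th frame flow, `Gⁱφ(f) = ⟪grad ʰφ(f), vᵢ⟫` -/
def G (i : Fin k) (φ : B.F → ℝ) (f : B.F) : ℝ := ⟪B.gradH φ f, B.vec f i⟫

/-- the horizontal divergence of a semi-basic vector field -/
def divH (X : B.F → EuclideanSpace ℝ (Fin n)) (f : B.F) : ℝ :=
  ∑ j : Fin n, ⟪B.covH X f (EuclideanSpace.single j 1), EuclideanSpace.single j 1⟫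

/-- the `i`-th vertical divergence of a semi-basic vector field -/
def divV (i : Fin k) (X : B.F → EuclideanSpace ℝ (Fin n)) (f : B.F) : ℝ :=
  ∑ j : Fin n, ⟪B.covV i X f (EuclideanSpace.single j 1), EuclideanSpace.single j 1⟫

/-- the vertical gradient orthogonally projected to the tangent space of the frame
bundle `P^k M`:
`grad^{v,i}_{o(k)} φ(f) = grad^{v,i} φ(f) − ½ Σⱼ (⟪grad^{v,i}φ(f),vⱼ⟫+⟪grad^{v,j}φ(f),vᵢ⟫) vⱼ` -/
def gradVProj (i : Fin k) (φ : B.F → ℝ) (f : B.F) : EuclideanSpace ℝ (Fin n) :=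
  B.gradV i φ f - (1 / 2 : ℝ) •
    ∑ j : Fin k, (⟪B.gradV i φ f, B.vec f j⟫ + ⟪B.gradV j φ f, B.vec f i⟫) • B.vec f j

end TupleBundle

/-- The bundle `P^k M ⊂ T^k M` of orthonormal `k`-frames, equipped with the natural
measure `dμ = dvol dν_p`, where `ν_p` is the `O(n)`-invariant measure on the Stiefel
fiber. -/
structure FrameBundle (n k : ℕ) extends TupleBundle n k where
  measF : MeasurableSpace F
  /-- the measure `dμ = dvol dν_p`, carried by the orthonormal frames -/
  μ : @MeasureTheory.Measure F measF
  μ_frames : ∀ᵐ f ∂μ, Orthonormal ℝ (vec f)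
  μ_finite : MeasureTheory.IsFiniteMeasure μ

/- The projection subtracts from each `grad^{v,i} φ(f)` the combination `Σⱼ tᵢⱼ vⱼ` with the
symmetric coefficients `tᵢⱼ = ½(⟪grad^{v,i}φ(f), vⱼ⟫ + ⟪grad^{v,j}φ(f), vᵢ⟫)`. Expanding the
projected pairing, every term containing such a combination is a contraction of the symmetric
`t` against a tensor that is antisymmetric in the same two indices: in the first slot of `R`
by its antisymmetry in the first pair, in the last slot by its antisymmetry in the second pair.
So only the unprojected pairing survives. -/

theorem sum_sum_mul_eq_zero_of_symm_of_antisymm {ι 𝕜 : Type*} [Fintype ι] [Ring 𝕜]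
    [NoZeroDivisors 𝕜] [CharZero 𝕜] (t A : ι → ι → 𝕜)
    (ht : ∀ a b, t a b = t b a) (hA : ∀ a b, A a b = -A b a) :
    ∑ a, ∑ b, t a b * A a b = 0 := by
  refine self_eq_neg.mp ?_
  calc ∑ a, ∑ b, t a b * A a b
      = ∑ b, ∑ a, t a b * A a b := Finset.sum_comm
    _ = ∑ b, ∑ a, -(t b a * A b a) := by
        refine Finset.sum_congr rfl fun b _ => Finset.sum_congr rfl fun a _ => ?_
        rw [ht a b, hA a b, mul_neg]
    _ = -∑ a, ∑ b, t a b * A a b := by simp only [Finset.sum_neg_distrib]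

section CurvatureSymmetries

variable {ι E : Type*} [Fintype ι] [NormedAddCommGroup E] [InnerProductSpace ℝ E]
  {R : E → E → E → E}

theorem inner_curv_swap_one_four (h₁ : ∀ x y z w, ⟪R x y z, w⟫ = -⟪R y x z, w⟫)
    (h₂ : ∀ x y z w, ⟪R x y z, w⟫ = -⟪R x y w, z⟫) (hp : ∀ x y z w, ⟪R x y z, w⟫ = ⟪R z w x, y⟫)
    (x y z w : E) : ⟪R x y z, w⟫ = ⟪R w z y, x⟫ := by
  rw [hp, h₁, h₂, neg_neg]

theorem inner_curv_sub_left (hswap : ∀ x y z w, ⟪R x y z, w⟫ = ⟪R w z y, x⟫)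
    (x x' y z w : E) : ⟪R (x - x') y z, w⟫ = ⟪R x y z, w⟫ - ⟪R x' y z, w⟫ := by
  rw [hswap, inner_sub_right, hswap w, hswap w]

theorem inner_curv_sum_smul_left (hswap : ∀ x y z w, ⟪R x y z, w⟫ = ⟪R w z y, x⟫)
    (s : ι → ℝ) (v : ι → E) (y z w : E) :
    ⟪R (∑ a, s a • v a) y z, w⟫ = ∑ a, s a * ⟪R (v a) y z, w⟫ := by
  simp only [hswap _ y z w, inner_sum, real_inner_smul_right]

theorem sum_sum_inner_curv_symm_comb_left (hswap : ∀ x y z w, ⟪R x y z, w⟫ = ⟪R w z y, x⟫)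
    (h₁ : ∀ x y z w, ⟪R x y z, w⟫ = -⟪R y x z, w⟫) {t : ι → ι → ℝ}
    (ht : ∀ a b, t a b = t b a) (v w : ι → E) :
    ∑ i, ∑ j, ⟪R (∑ a, t j a • v a) (v j) (v i), w i⟫ = 0 := by
  have hA : ∀ j a, ∑ i, ⟪R (v a) (v j) (v i), w i⟫ = -∑ i, ⟪R (v j) (v a) (v i), w i⟫ := by
    intro j a
    simp only [h₁ (v a), Finset.sum_neg_distrib]
  calc ∑ i, ∑ j, ⟪R (∑ a, t j a • v a) (v j) (v i), w i⟫
      = ∑ j, ∑ a, t j a * ∑ i, ⟪R (v a) (v j) (v i), w i⟫ := by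
        simp only [inner_curv_sum_smul_left hswap, Finset.mul_sum]
        rw [Finset.sum_comm]
        exact Finset.sum_congr rfl fun j _ => Finset.sum_comm
    _ = 0 := sum_sum_mul_eq_zero_of_symm_of_antisymm t _ ht hA

theorem sum_sum_inner_curv_symm_comb_right (h₂ : ∀ x y z w, ⟪R x y z, w⟫ = -⟪R x y w, z⟫)
    {t : ι → ι → ℝ} (ht : ∀ a b, t a b = t b a) (v x : ι → E) :
    ∑ i, ∑ j, ⟪R (x j) (v j) (v i), ∑ b, t i b • v b⟫ = 0 := by
  have hA : ∀ i b, ∑ j, ⟪R (x j) (v j) (v i), v b⟫ = -∑ j, ⟪R (x j) (v j) (v b), v i⟫ := by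
    intro i b
    simp only [h₂ _ _ (v i), Finset.sum_neg_distrib]
  calc ∑ i, ∑ j, ⟪R (x j) (v j) (v i), ∑ b, t i b • v b⟫
      = ∑ i, ∑ b, t i b * ∑ j, ⟪R (x j) (v j) (v i), v b⟫ := by
        simp only [inner_sum, real_inner_smul_right, Finset.mul_sum]
        exact Finset.sum_congr rfl fun i _ => Finset.sum_comm
    _ = 0 := sum_sum_mul_eq_zero_of_symm_of_antisymm t _ ht hA

theorem sum_sum_inner_curv_sub_symm_comb (h₁ : ∀ x y z w, ⟪R x y z, w⟫ = -⟪R y x z, w⟫)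
    (h₂ : ∀ x y z w, ⟪R x y z, w⟫ = -⟪R x y w, z⟫) (hp : ∀ x y z w, ⟪R x y z, w⟫ = ⟪R z w x, y⟫)
    {t : ι → ι → ℝ} (ht : ∀ a b, t a b = t b a) (v g : ι → E) :
    ∑ i, ∑ j, ⟪R (g j - ∑ a, t j a • v a) (v j) (v i), g i - ∑ b, t i b • v b⟫
      = ∑ i, ∑ j, ⟪R (g j) (v j) (v i), g i⟫ := by
  have hswap := inner_curv_swap_one_four h₁ h₂ hp
  simp only [inner_curv_sub_left hswap, inner_sub_right, Finset.sum_sub_distrib,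
    sum_sum_inner_curv_symm_comb_left hswap h₁ ht, sum_sum_inner_curv_symm_comb_right h₂ ht,
    sub_zero]

end CurvatureSymmetries

theorem TupleBundle.gradVProj_eq_sub_sum {n k : ℕ} (B : TupleBundle n k) (i : Fin k)
    (φ : B.F → ℝ) (f : B.F) :
    B.gradVProj i φ f = B.gradV i φ f - ∑ a, ((1 / 2 : ℝ) *
      (⟪B.gradV i φ f, B.vec f a⟫ + ⟪B.gradV a φ f, B.vec f i⟫)) • B.vec f a := by
  simp only [TupleBundle.gradVProj, Finset.smul_sum, smul_smul]

theorem stmt10_general {n k : ℕ} (B : TupleBundle n k) (φ : B.F → ℝ) (f : B.F) :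
    ∑ i : Fin k, ∑ j : Fin k,
        ⟪B.R f (B.gradV j φ f) (B.vec f j) (B.vec f i), B.gradV i φ f⟫
      = ∑ i : Fin k, ∑ j : Fin k,
        ⟪B.R f (B.gradVProj j φ f) (B.vec f j) (B.vec f i), B.gradVProj i φ f⟫ := by
  simp only [B.gradVProj_eq_sub_sum]
  exact (sum_sum_inner_curv_sub_symm_comb (B.R_antisym₁ f) (B.R_antisym₂ f) (B.R_pairsym f)
    (fun a b => by rw [add_comm]) _ _).symm

/-- The curvature pairing of the vertical gradients is unchanged by projecting onto the
skew-symmetric part. -/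
theorem stmt10 {n k : ℕ} (B : TupleBundle n k) (φ : B.F → ℝ) (hφ : B.Smooth φ)
    (f : B.F) (hf : Orthonormal ℝ (B.vec f)) :
    ∑ i : Fin k, ∑ j : Fin k,
        ⟪B.R f (B.gradV j φ f) (B.vec f j) (B.vec f i), B.gradV i φ f⟫
      = ∑ i : Fin k, ∑ j : Fin k,
        ⟪B.R f (B.gradVProj j φ f) (B.vec f j) (B.vec f i), B.gradVProj i φ f⟫ :=
  stmt10_general B φ f

end
end

section
/- Let (v_1,...,v_n) be an orthonormal basis of an inner product space, and let w_1,...,w_n be vectors such that A_{ij} = ⟨w_i, v_j⟩ is skew-symmetric, w_i ∈ span{v_{k+1},...,v_n} for i ≤ k, and w_i ∈ span{v_1,...,v_k} for i ≥ k+1. Then in the exterior square, Σ_{j=1}^n w_j ∧ v_j = 2 Σ_{j=1}^k w_j ∧ v_j. -/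
open scoped RealInnerProductSpace

noncomputable section

/-! Expanding `w j = Σ_l ⟪w j, v l⟫ v l` turns `Σ_j w_j ∧ v_j` into `Σ_{j,l} T j l` with
`T j l = ⟪w j, v l⟫ v_l ∧ v_j`. Skew-symmetry of `⟪w i, v j⟫` and antisymmetry of `∧` make `T`
symmetric, and the span conditions kill `T j l` unless exactly one of `j, l` is `< k`. So the
double sum consists of two equal off-diagonal blocks, each of which is `Σ_{j < k} w_j ∧ v_j`. -/

theorem Finset.sum_sum_eq_two_nsmul_of_symm_of_eq_zero {ι M : Type*} [Fintype ι]
    [AddCommMonoid M] (s : Finset ι) (T : ι → ι → M) (hsymm : ∀ i j, T i j = T j i)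
    (hzero : ∀ i j, (i ∈ s ↔ j ∈ s) → T i j = 0) :
    ∑ i, ∑ j, T i j = 2 • ∑ i ∈ s, ∑ j, T i j := by
  classical
  have row_in : ∀ i ∈ s, ∑ j, T i j = ∑ j ∈ sᶜ, T i j := fun i hi =>
    (Finset.sum_subset (Finset.subset_univ _) fun j _ hj =>
      hzero i j (by simp_all)).symm
  have row_out : ∀ i ∈ sᶜ, ∑ j, T i j = ∑ j ∈ s, T i j := fun i hi =>
    (Finset.sum_subset (Finset.subset_univ _) fun j _ hj =>
      hzero i j (by simp_all)).symm
  calc ∑ i, ∑ j, T i j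
      = ∑ i ∈ s, ∑ j, T i j + ∑ i ∈ sᶜ, ∑ j ∈ s, T i j := by
        rw [← Finset.sum_congr rfl row_out, Finset.sum_add_sum_compl]
    _ = ∑ i ∈ s, ∑ j, T i j + ∑ i ∈ s, ∑ j ∈ sᶜ, T i j := by
        rw [Finset.sum_comm (s := sᶜ)]; simp only [hsymm]
    _ = 2 • ∑ i ∈ s, ∑ j, T i j := by
        rw [← Finset.sum_congr rfl row_in, two_nsmul]

theorem Orthonormal.inner_eq_zero_of_mem_span_image {ι V : Type*} [NormedAddCommGroup V]
    [InnerProductSpace ℝ V] {v : ι → V} (hv : Orthonormal ℝ v) {s : Set ι} {i : ι} (hi : i ∉ s)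
    {x : V} (hx : x ∈ Submodule.span ℝ (v '' s)) : ⟪x, v i⟫ = 0 := by
  obtain ⟨l, hl, rfl⟩ := Finsupp.mem_span_image_iff_linearCombination ℝ |>.mp hx
  exact hv.inner_finsupp_eq_zero hi hl

namespace ExteriorAlgebra

variable {I V : Type*} [NormedAddCommGroup V] [InnerProductSpace ℝ V]

theorem ι_mul_ι_eq_sum_inner_smul [Fintype I] (b : OrthonormalBasis I ℝ V) (x y : V) :
    ι ℝ x * ι ℝ y = ∑ l, ⟪x, b l⟫ • (ι ℝ (b l) * ι ℝ y) := by
  conv_lhs => rw [← b.sum_repr' x]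
  simp only [map_sum, map_smul, Finset.sum_mul, smul_mul_assoc, real_inner_comm]

theorem inner_smul_ι_mul_ι_symm {v w : I → V} (hskew : ∀ i j, ⟪w i, v j⟫ = -⟪w j, v i⟫)
    (i j : I) :
    ⟪w i, v j⟫ • (ι ℝ (v j) * ι ℝ (v i)) = ⟪w j, v i⟫ • (ι ℝ (v i) * ι ℝ (v j)) := by
  rw [hskew, neg_smul, ← smul_neg, neg_eq_of_add_eq_zero_left (ι_add_mul_swap _ _)]

end ExteriorAlgebra

theorem stmt14_general {V : Type*} [NormedAddCommGroup V] [InnerProductSpace ℝ V]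
    {n k : ℕ} (v w : Fin n → V)
    (hon : Orthonormal ℝ v) (hspan : ⊤ ≤ Submodule.span ℝ (Set.range v))
    (hskew : ∀ i j : Fin n, ⟪w i, v j⟫ = -⟪w j, v i⟫)
    (hlow : ∀ i : Fin n, (i : ℕ) < k →
      w i ∈ Submodule.span ℝ (v '' {l : Fin n | k ≤ (l : ℕ)}))
    (hhigh : ∀ i : Fin n, k ≤ (i : ℕ) →
      w i ∈ Submodule.span ℝ (v '' {l : Fin n | (l : ℕ) < k})) :
    ∑ j : Fin n, ExteriorAlgebra.ι ℝ (w j) * ExteriorAlgebra.ι ℝ (v j)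
      = (2 : ℝ) • ∑ j ∈ Finset.univ.filter (fun j : Fin n => (j : ℕ) < k),
          ExteriorAlgebra.ι ℝ (w j) * ExteriorAlgebra.ι ℝ (v j) := by
  have hexpand (j : Fin n) : ExteriorAlgebra.ι ℝ (w j) * ExteriorAlgebra.ι ℝ (v j) =
      ∑ l, ⟪w j, v l⟫ • (ExteriorAlgebra.ι ℝ (v l) * ExteriorAlgebra.ι ℝ (v j)) := by
    rw [ExteriorAlgebra.ι_mul_ι_eq_sum_inner_smul (OrthonormalBasis.mk hon hspan),
      OrthonormalBasis.coe_mk]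
  have hblock (j l : Fin n) (hjl : (j : ℕ) < k ↔ (l : ℕ) < k) : ⟪w j, v l⟫ = 0 := by
    by_cases hj : (j : ℕ) < k
    · exact hon.inner_eq_zero_of_mem_span_image (by simpa using hjl.mp hj) (hlow j hj)
    · exact hon.inner_eq_zero_of_mem_span_image (by simpa using hj ∘ hjl.mpr)
        (hhigh j (not_lt.mp hj))
  simp only [hexpand, two_smul ℝ, ← two_nsmul]
  refine Finset.sum_sum_eq_two_nsmul_of_symm_of_eq_zero _ _
    (ExteriorAlgebra.inner_smul_ι_mul_ι_symm hskew) fun j l hjl => ?_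
  rw [hblock j l (by simpa using hjl), zero_smul]

/-- Doubling identity in the exterior square: if `v` is an orthonormal basis,
`(⟪w i, v j⟫)` is skew-symmetric, `w i ∈ span {v_(k+1), …, v_n}` for `i ≤ k` and
`w i ∈ span {v_1, …, v_k}` for `i ≥ k+1`, then `Σ_j w_j ∧ v_j = 2 Σ_(j ≤ k) w_j ∧ v_j`. -/
theorem stmt14 {V : Type*} [NormedAddCommGroup V] [InnerProductSpace ℝ V]
    {n k : ℕ} (hk1 : 1 ≤ k) (hk : k ≤ n) (v w : Fin n → V)
    (hon : Orthonormal ℝ v) (hspan : ⊤ ≤ Submodule.span ℝ (Set.range v))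
    (hskew : ∀ i j : Fin n, ⟪w i, v j⟫ = -⟪w j, v i⟫)
    (hlow : ∀ i : Fin n, (i : ℕ) < k →
      w i ∈ Submodule.span ℝ (v '' {l : Fin n | k ≤ (l : ℕ)}))
    (hhigh : ∀ i : Fin n, k ≤ (i : ℕ) →
      w i ∈ Submodule.span ℝ (v '' {l : Fin n | (l : ℕ) < k})) :
    ∑ j : Fin n, ExteriorAlgebra.ι ℝ (w j) * ExteriorAlgebra.ι ℝ (v j)
      = (2 : ℝ) • ∑ j ∈ Finset.univ.filter (fun j : Fin n => (j : ℕ) < k),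
          ExteriorAlgebra.ι ℝ (w j) * ExteriorAlgebra.ι ℝ (v j) :=
  stmt14_general v w hon hspan hskew hlow hhigh

end
end
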